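/- Z property for β: if s →β t then t →β* s• and s• →β* t•, where • is the full-superdevelopment map. -/

import Mathlib

/-- Untyped λ-terms in de Bruijn representation (terms up to α-equivalence). -/
inductive Lam : Type
  | var : Nat → Lam
  | app : Lam → Lam → Lam
  | abs : Lam → Lam
  deriving DecidableEq

namespace Lam

/-- Lift (shift up) free variables ≥ k. -/
def lift : Lam → Nat → Lam
  | var i, k => if i < k then var i else var (i + 1)
  | app s t, k => app (lift s k) (lift t k)
  | abs t, k => abs (lift t (k + 1))

/-- Capture-avoiding substitution `t[x := u]`. -/
def subst : Lam → Nat → Lam → Lam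
  | var i, k, u => if i < k then var i else if i = k then u else var (i - 1)
  | app s t, k, u => app (subst s k u) (subst t k u)
  | abs t, k, u => abs (subst t (k + 1) (lift u 0))

/-- `x` occurs free in a term. -/
def IsFree (x : Nat) : Lam → Prop
  | var i => i = x
  | app s t => IsFree x s ∨ IsFree x t
  | abs t => IsFree (x + 1) t

/-- β-reduction: the compatible closure of the β-rule. -/
inductive Beta : Lam → Lam → Prop
  | beta (t s : Lam) : Beta (app (abs t) s) (subst t 0 s)
  | appL {s s' : Lam} (t : Lam) : Beta s s' → Beta (app s t) (app s' t)
  | appR (s : Lam) {t t' : Lam} : Beta t t' → Beta (app s t) (app s t')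
  | abs {t t' : Lam} : Beta t t' → Beta (abs t) (abs t')

/-- Reflexive-transitive closure of β-reduction. -/
abbrev Betas : Lam → Lam → Prop := Relation.ReflTransGen Beta

/-- Application with built-in β-reduction at the root. -/
def appBeta : Lam → Lam → Lam
  | abs u, v => subst u 0 v
  | s, v => app s v

/-- The full-superdevelopment map. -/
def dev : Lam → Lam
  | var i => var i
  | abs t => abs (dev t)
  | app s t => appBeta (dev s) (dev t)

end Lam

/-!
The first half is the observation that `s•` contracts every redex of `s`, in particular the one
fired in `s →β t`, so the residuals of the remaining redexes can still be contracted from `t`.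
The second half rests on the substitution lemma `u•[x := v•] →β* (u[x := v])•`: `•` commutes
with substitution only up to `→β*`, because substituting an abstraction for a head variable
creates redexes that `(u[x := v])•` contracts but `u•[x := v•]` does not.
-/

namespace Lam

theorem lift_lift (t : Lam) {i j : ℕ} (h : i ≤ j) :
    lift (lift t i) (j + 1) = lift (lift t j) i := by
  induction t generalizing i j with
  | var n => grind [lift]
  | app a b iha ihb => simp [lift, iha h, ihb h]
  | abs a ih => simp [lift, ih (Nat.succ_le_succ h)]

theorem lift_subst_of_le (t : Lam) {k n : ℕ} (u : Lam) (h : k ≤ n) :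
    lift (subst t k u) n = subst (lift t (n + 1)) k (lift u n) := by
  induction t generalizing k n u with
  | var i => grind [lift, subst]
  | app a b iha ihb => simp [lift, subst, iha _ h, ihb _ h]
  | abs a ih => simp [lift, subst, ih _ (Nat.succ_le_succ h), lift_lift u (Nat.zero_le n)]

theorem lift_subst_of_ge (t : Lam) {k n : ℕ} (u : Lam) (h : k ≤ n) :
    lift (subst t n u) k = subst (lift t k) (n + 1) (lift u k) := by
  induction t generalizing k n u with
  | var i => grind [lift, subst]
  | app a b iha ihb => simp [lift, subst, iha _ h, ihb _ h]
  | abs a ih => simp [lift, subst, ih _ (Nat.succ_le_succ h), lift_lift u (Nat.zero_le k)]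

theorem subst_lift (t : Lam) (k : ℕ) (u : Lam) : subst (lift t k) k u = t := by
  induction t generalizing k u with
  | var i => grind [lift, subst]
  | app a b iha ihb => simp [lift, subst, iha, ihb]
  | abs a ih => simp [lift, subst, ih]

theorem subst_subst (t : Lam) {k n : ℕ} (u v : Lam) (h : k ≤ n) :
    subst (subst t k u) n v = subst (subst t (n + 1) (lift v k)) k (subst u n v) := by
  induction t generalizing k n u v with
  | var i => grind [lift, subst, subst_lift]
  | app a b iha ihb => simp [subst, iha _ _ h, ihb _ _ h]
  | abs a ih =>
    simp [subst, ih _ _ (Nat.succ_le_succ h), lift_lift v (Nat.zero_le k),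
      lift_subst_of_ge u v (Nat.zero_le n)]

theorem Beta.lift {t t' : Lam} (h : Beta t t') (k : ℕ) : Beta (lift t k) (lift t' k) := by
  induction h generalizing k with
  | beta a b =>
    rw [lift_subst_of_le a b (Nat.zero_le k)]
    exact .beta _ _
  | appL _ _ ih => exact .appL _ (ih k)
  | appR _ _ ih => exact .appR _ (ih k)
  | abs _ ih => exact .abs (ih (k + 1))

theorem Beta.subst {t t' : Lam} (h : Beta t t') (k : ℕ) (u : Lam) :
    Beta (subst t k u) (subst t' k u) := by
  induction h generalizing k u with
  | beta a b =>
    rw [subst_subst a b u (Nat.zero_le k)]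
    exact .beta _ _
  | appL _ _ ih => exact .appL _ (ih k u)
  | appR _ _ ih => exact .appR _ (ih k u)
  | abs _ ih => exact .abs (ih (k + 1) (Lam.lift u 0))

theorem betas_app {a a' b b' : Lam} (ha : Betas a a') (hb : Betas b b') :
    Betas (app a b) (app a' b') :=
  (ha.lift (app · b) fun _ _ h => .appL _ h).trans (hb.lift (app a') fun _ _ h => .appR _ h)

theorem betas_abs {a a' : Lam} (h : Betas a a') : Betas (abs a) (abs a') :=
  h.lift abs fun _ _ h => .abs h

theorem exists_eq_abs_of_abs_betas {w x : Lam} (h : Betas (abs w) x) :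
    ∃ w', x = abs w' ∧ Betas w w' := by
  induction h with
  | refl => exact ⟨w, rfl, .refl⟩
  | tail _ h ih =>
    obtain ⟨w', rfl, hw⟩ := ih
    cases h with
    | abs h' => exact ⟨_, rfl, hw.tail h'⟩

theorem betas_subst_right (t : Lam) (k : ℕ) {u u' : Lam} (h : Beta u u') :
    Betas (subst t k u) (subst t k u') := by
  induction t generalizing k u u' with
  | var i =>
    simp only [subst]
    split_ifs
    exacts [.refl, .single h, .refl]
  | app a b iha ihb => exact betas_app (iha k h) (ihb k h)
  | abs a ih => exact betas_abs (ih (k + 1) (h.lift 0))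

theorem betas_subst {a a' b b' : Lam} (ha : Betas a a') (hb : Betas b b') (k : ℕ) :
    Betas (subst a k b) (subst a' k b') :=
  (ha.lift (subst · k b) fun _ _ h => h.subst k b).trans
    (Relation.ReflTransGen.lift' (subst a' k) (fun _ _ h => betas_subst_right a' k h) _ _ hb)

theorem app_betas_appBeta (s t : Lam) : Betas (app s t) (appBeta s t) := by
  cases s with
  | abs u => exact .single (.beta u t)
  | var | app => exact .refl

theorem betas_appBeta {u u' v v' : Lam} (hu : Betas u u') (hv : Betas v v') :
    Betas (appBeta u v) (appBeta u' v') := by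
  cases u with
  | abs w =>
    obtain ⟨w', rfl, hw⟩ := exists_eq_abs_of_abs_betas hu
    exact betas_subst hw hv 0
  | var | app => exact (betas_app hu hv).trans (app_betas_appBeta u' v')

theorem lift_appBeta (u v : Lam) (k : ℕ) :
    lift (appBeta u v) k = appBeta (lift u k) (lift v k) := by
  cases u with
  | var i => simp only [lift, appBeta]; split_ifs <;> rfl
  | app => rfl
  | abs w => exact lift_subst_of_le w v (Nat.zero_le k)

theorem subst_appBeta_betas (u v w : Lam) (k : ℕ) :
    Betas (subst (appBeta u v) k w) (appBeta (subst u k w) (subst v k w)) := by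
  cases u with
  | abs x => rw [appBeta, subst, appBeta, subst_subst x v w (Nat.zero_le k)]
  | var | app => exact app_betas_appBeta _ _

theorem dev_lift (t : Lam) (k : ℕ) : dev (lift t k) = lift (dev t) k := by
  induction t generalizing k with
  | var i => simp only [lift, dev]; split_ifs <;> rfl
  | app a b iha ihb => simp only [lift, dev, iha, ihb, lift_appBeta]
  | abs a ih => simp only [lift, dev, ih]

theorem betas_dev (t : Lam) : Betas t (dev t) := by
  induction t with
  | var => exact .refl
  | app a b iha ihb => exact (betas_app iha ihb).trans (app_betas_appBeta (dev a) (dev b))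
  | abs a ih => exact betas_abs ih

theorem subst_dev_betas (t : Lam) (k : ℕ) (s : Lam) :
    Betas (subst (dev t) k (dev s)) (dev (subst t k s)) := by
  induction t generalizing k s with
  | var i =>
    simp only [dev, subst]
    split_ifs <;> exact .refl
  | app a b iha ihb =>
    exact (subst_appBeta_betas (dev a) (dev b) (dev s) k).trans (betas_appBeta (iha k s) (ihb k s))
  | abs a ih =>
    simp only [dev, subst]
    exact betas_abs (dev_lift s 0 ▸ ih (k + 1) (lift s 0))

theorem Beta.betas_dev {s t : Lam} (h : Beta s t) : Betas t (dev s) := by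
  induction h with
  | beta a b => exact betas_subst (Lam.betas_dev a) (Lam.betas_dev b) 0
  | appL t _ ih => exact (betas_app ih (Lam.betas_dev t)).trans (app_betas_appBeta _ _)
  | appR s _ ih => exact (betas_app (Lam.betas_dev s) ih).trans (app_betas_appBeta _ _)
  | abs _ ih => exact betas_abs ih

theorem Beta.dev_betas_dev {s t : Lam} (h : Beta s t) : Betas (dev s) (dev t) := by
  induction h with
  | beta a b => exact subst_dev_betas a 0 b
  | appL _ _ ih => exact betas_appBeta ih .refl
  | appR _ _ ih => exact betas_appBeta .refl ih
  | abs _ ih => exact betas_abs ih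

end Lam

theorem z_beta {s t : Lam} (h : Lam.Beta s t) :
    Lam.Betas t (Lam.dev s) ∧ Lam.Betas (Lam.dev s) (Lam.dev t) :=
  ⟨h.betas_dev, h.dev_betas_dev⟩
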